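/- arXiv:2512.03023 — 5 statements merged into one kernel-verified Lean document; each statement's English description precedes it below -/
import Mathlib

section
/- Let $I$ be a nonempty finite set, let $(I_n)_{n\in\mathbb{N}}$ be random nonempty subsets of $I$ with $I_0 = I$, and let $i \in I$ be such that the events $([i \in I_n])_{n\in\mathbb{N}}$ are mutually independent and there exist $N \in \mathbb{N}\setminus\{0\}$ and $\pi \in (0,1]$ with $P\big(\bigcup_{j=n}^{n+N-1}[i \in I_j]\big) \ge \pi$ for all $n$. Define $\vartheta(n) = \max\{j \le n : i \in I_j\}$. Then $\limsup_{n} E(n - \vartheta(n)) \le N^2\,(1 + (1+\pi)/\pi^2) < +\infty$; in particular the expected delays $E(n - \vartheta(n))$ are bounded. -/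
open MeasureTheory Filter ProbabilityTheory
open scoped Classical

/-!
Write `n - ϑ(n) = ∑_{k < n} 1[ϑ(n) ≤ k]`. Since `I₀ = I`, the event `ϑ(n) ≤ k` says that `i` misses
`I_{k+1}, …, I_n`; this window contains `⌊(n - k)/N⌋` disjoint blocks of length `N`, each of which
`i` misses with probability at most `1 - π`, so by independence `P(ϑ(n) ≤ k) ≤ (1 - π)^⌊(n - k)/N⌋`.
Summing this geometric-type series gives `E(n - ϑ(n)) ≤ N / π` for every `n`, which is below the
claimed constant.
-/

open Finset

lemma Nat.findGreatest_le_iff_of_zero {p : ℕ → Prop} [DecidablePred p] (h0 : p 0) {n k : ℕ} :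
    Nat.findGreatest p n ≤ k ↔ ∀ j ∈ Ioc k n, ¬ p j := by
  constructor
  · rintro h j hj hpj
    have := Nat.le_findGreatest (mem_Ioc.1 hj).2 hpj
    have := (mem_Ioc.1 hj).1
    omega
  · intro h
    by_contra! hlt
    exact h _ (mem_Ioc.2 ⟨hlt, Nat.findGreatest_le n⟩) (Nat.findGreatest_spec (Nat.zero_le n) h0)

lemma Finset.sum_range_mul_comp_div {M : Type*} [AddCommMonoid M] (f : ℕ → M) {N : ℕ}
    (hN : 0 < N) (m : ℕ) :
    ∑ j ∈ range (m * N), f (j / N) = N • ∑ b ∈ range m, f b := by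
  induction m with
  | zero => simp
  | succ m ih =>
    have hblock : ∀ c ∈ range N, f ((m * N + c) / N) = f m := fun c hc => by
      rw [Nat.add_comm, Nat.add_mul_div_right _ _ hN, Nat.div_eq_of_lt (mem_range.1 hc), zero_add]
    rw [Nat.succ_mul, sum_range_add, ih, sum_congr rfl hblock, sum_const, card_range,
      sum_range_succ, smul_add]

lemma sum_range_pow_sub_div_le {r : ℝ} (hr0 : 0 ≤ r) (hr1 : r < 1) {N : ℕ} (hN : 0 < N) (n : ℕ) :
    ∑ k ∈ range n, r ^ ((n - k) / N) ≤ N / (1 - r) := by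
  have hgeom : ∑ b ∈ range n, r ^ b ≤ 1 / (1 - r) := by
    have := geom_sum_Ico_le_of_lt_one (m := 0) (n := n) hr0 hr1
    rwa [pow_zero, ← range_eq_Ico] at this
  calc ∑ k ∈ range n, r ^ ((n - k) / N)
      ≤ ∑ k ∈ range n, r ^ ((n - 1 - k) / N) :=
        sum_le_sum fun k _ => pow_le_pow_of_le_one hr0 hr1.le (Nat.div_le_div_right (by omega))
    _ = ∑ j ∈ range n, r ^ (j / N) := sum_range_reflect (fun j => r ^ (j / N)) n
    _ ≤ ∑ j ∈ range (n * N), r ^ (j / N) :=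
        sum_le_sum_of_subset_of_nonneg (range_subset_range.2 (Nat.le_mul_of_pos_right n hN))
          fun _ _ _ => pow_nonneg hr0 _
    _ = N * ∑ b ∈ range n, r ^ b := by rw [sum_range_mul_comp_div _ hN, nsmul_eq_mul]
    _ ≤ N * (1 / (1 - r)) := by gcongr
    _ = N / (1 - r) := mul_one_div _ _

section

variable {Ω : Type*} [MeasurableSpace Ω] {μ : Measure Ω}

lemma ProbabilityTheory.iIndepSet.measureReal_biInter_compl {ι : Type*} {f : ι → Set Ω}
    (h : iIndepSet f μ) (S : Finset ι) :
    μ.real (⋂ i ∈ S, (f i)ᶜ) = ∏ i ∈ S, μ.real (f i)ᶜ := by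
  have := iIndep.meas_biInter (S := S) (s := fun i => (f i)ᶜ) h
    fun i _ => (MeasurableSpace.measurableSet_generateFrom (Set.mem_singleton _)).compl
  simp only [measureReal_def, this, ENNReal.toReal_prod]

lemma integral_natCast_sub_eq_sum_measureReal [IsFiniteMeasure μ] {T : Ω → ℕ} {n : ℕ}
    (hT : ∀ ω, T ω ≤ n) (hmeas : ∀ k, MeasurableSet {ω | T ω ≤ k}) :
    ∫ ω, ((n : ℝ) - T ω) ∂μ = ∑ k ∈ range n, μ.real {ω | T ω ≤ k} := by
  have hcount : ∀ ω, (n : ℝ) - T ω = ∑ k ∈ range n, {ω | T ω ≤ k}.indicator 1 ω := by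
    intro ω
    have hfilter : (range n).filter (T ω ≤ ·) = Ico (T ω) n := by
      ext k
      simp only [mem_filter, mem_range, mem_Ico]
      omega
    simp only [Set.indicator_apply, Set.mem_ofPred_eq, Pi.one_apply, sum_boole, hfilter,
      Nat.card_Ico, Nat.cast_sub (hT ω)]
  simp_rw [hcount]
  rw [integral_finsetSum _ fun k _ => (integrable_const 1).indicator (hmeas k)]
  simp_rw [integral_indicator_one (hmeas _)]

variable [IsProbabilityMeasure μ] {A : ℕ → Set Ω} {N : ℕ} {π : ℝ}

lemma measureReal_biInter_compl_Ioc_add_mul_le (hA : ∀ n, MeasurableSet (A n))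
    (hind : iIndepSet A μ) (hπ : ∀ n, π ≤ μ.real (⋃ j ∈ Ico n (n + N), A j)) (a m : ℕ) :
    μ.real (⋂ j ∈ Ioc a (a + m * N), (A j)ᶜ) ≤ (1 - π) ^ m := by
  have hblock : ∀ b, ∏ j ∈ Ioc b (b + N), μ.real (A j)ᶜ ≤ 1 - π := by
    intro b
    have hIoc : Ioc b (b + N) = Ico (b + 1) (b + 1 + N) := by
      ext j
      simp only [mem_Ioc, mem_Ico]
      omega
    rw [← hind.measureReal_biInter_compl, hIoc, ← Set.compl_iUnion₂,
      measureReal_compl (measurableSet_biUnion _ fun j _ => hA j), probReal_univ]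
    linarith [hπ (b + 1)]
  rw [hind.measureReal_biInter_compl]
  induction m with
  | zero => simp
  | succ m ih =>
    rw [Nat.succ_mul, ← add_assoc, ← prod_Ioc_consecutive _ (Nat.le_add_right a (m * N))
      (Nat.le_add_right _ N), pow_succ]
    exact mul_le_mul_of_nonneg ih (hblock _) (prod_nonneg fun _ _ => measureReal_nonneg)
      ((prod_nonneg fun _ _ => measureReal_nonneg).trans (hblock 0))

lemma measureReal_biInter_compl_Ioc_le (hA : ∀ n, MeasurableSet (A n))
    (hind : iIndepSet A μ) (hπ : ∀ n, π ≤ μ.real (⋃ j ∈ Ico n (n + N), A j)) (k n : ℕ) :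
    μ.real (⋂ j ∈ Ioc k n, (A j)ᶜ) ≤ (1 - π) ^ ((n - k) / N) := by
  have hsub : Ioc k (k + (n - k) / N * N) ⊆ Ioc k n := by
    intro j hj
    have := Nat.div_mul_le_self (n - k) N
    simp only [mem_Ioc] at hj ⊢
    omega
  calc μ.real (⋂ j ∈ Ioc k n, (A j)ᶜ)
      ≤ μ.real (⋂ j ∈ Ioc k (k + (n - k) / N * N), (A j)ᶜ) :=
        measureReal_mono (Set.biInter_subset_biInter_left fun j hj => hsub hj)
    _ ≤ (1 - π) ^ ((n - k) / N) := measureReal_biInter_compl_Ioc_add_mul_le hA hind hπ k _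

end

theorem stmt5_general {Ω ι : Type*} [MeasurableSpace Ω]
    (P : Measure Ω) [IsProbabilityMeasure P]
    (I : ℕ → Ω → Set ι)
    (h0 : ∀ ω, I 0 ω = Set.univ)
    (i : ι)
    (hmeas : ∀ n, MeasurableSet {ω | i ∈ I n ω})
    (hindep : iIndepSet (fun n => {ω | i ∈ I n ω}) P)
    (N : ℕ) (hN : 1 ≤ N) (π : ℝ) (hπ0 : 0 < π) (hπ1 : π ≤ 1)
    (hπ : ∀ n, ENNReal.ofReal π ≤ P (⋃ j ∈ Finset.Ico n (n + N), {ω | i ∈ I j ω})) :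
    limsup
        (fun (n : ℕ) => ∫ ω, ((n : ℝ) - (Nat.findGreatest (fun j => i ∈ I j ω) n : ℝ)) ∂P)
        atTop ≤ (N : ℝ) ^ 2 * (1 + (1 + π) / π ^ 2) ∧
      ∃ M : ℝ, ∀ n : ℕ,
        ∫ ω, ((n : ℝ) - (Nat.findGreatest (fun j => i ∈ I j ω) n : ℝ)) ∂P ≤ M := by
  have hπ' : ∀ n, π ≤ P.real (⋃ j ∈ Ico n (n + N), {ω | i ∈ I j ω}) := fun n =>
    (ENNReal.ofReal_le_iff_le_toReal (measure_ne_top _ _)).1 (hπ n)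
  have hlevel : ∀ n k, {ω | Nat.findGreatest (fun j => i ∈ I j ω) n ≤ k} =
      ⋂ j ∈ Ioc k n, {ω | i ∈ I j ω}ᶜ := by
    intro n k
    ext ω
    simp [Nat.findGreatest_le_iff_of_zero (p := fun j => i ∈ I j ω) (by simp [h0 ω])]
  have hbound : ∀ n : ℕ,
      ∫ ω, ((n : ℝ) - (Nat.findGreatest (fun j => i ∈ I j ω) n : ℝ)) ∂P ≤ N / π := by
    intro n
    rw [integral_natCast_sub_eq_sum_measureReal (fun ω => Nat.findGreatest_le n) fun k => by
      rw [hlevel]; exact Finset.measurableSet_biInter _ fun j _ => (hmeas j).compl]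
    calc ∑ k ∈ range n, P.real {ω | Nat.findGreatest (fun j => i ∈ I j ω) n ≤ k}
        ≤ ∑ k ∈ range n, (1 - π) ^ ((n - k) / N) := sum_le_sum fun k _ => by
          rw [hlevel]; exact measureReal_biInter_compl_Ioc_le hmeas hindep hπ' k n
      _ ≤ N / (1 - (1 - π)) := sum_range_pow_sub_div_le (by linarith) (by linarith) hN n
      _ = N / π := by rw [sub_sub_cancel]
  have hconst : (N : ℝ) / π ≤ N ^ 2 * (1 + (1 + π) / π ^ 2) := by
    have hN1 : (1 : ℝ) ≤ N := by exact_mod_cast hN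
    have hinv : 1 / π ≤ 1 + (1 + π) / π ^ 2 := by
      have : (1 + π) / π ^ 2 = 1 / π ^ 2 + 1 / π := by field_simp
      rw [this]
      linarith [one_div_pos.2 (pow_pos hπ0 2)]
    calc (N : ℝ) / π = N * (1 / π) := (mul_one_div _ _).symm
      _ ≤ N ^ 2 * (1 / π) := by gcongr; nlinarith
      _ ≤ N ^ 2 * (1 + (1 + π) / π ^ 2) := by gcongr
  have hnonneg : ∀ n : ℕ,
      0 ≤ ∫ ω, ((n : ℝ) - (Nat.findGreatest (fun j => i ∈ I j ω) n : ℝ)) ∂P := fun n =>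
    integral_nonneg fun ω => sub_nonneg.2 (Nat.cast_le.2 (Nat.findGreatest_le n))
  exact ⟨limsup_le_of_le (isBoundedUnder_of ⟨0, hnonneg⟩).isCoboundedUnder_le
    (Eventually.of_forall fun n => (hbound n).trans hconst), N / π, hbound⟩

theorem stmt5 {Ω ι : Type*} [MeasurableSpace Ω] [Fintype ι] [Nonempty ι]
    (P : Measure Ω) [IsProbabilityMeasure P]
    (I : ℕ → Ω → Set ι)
    (hne : ∀ n ω, (I n ω).Nonempty)
    (h0 : ∀ ω, I 0 ω = Set.univ)
    (i : ι)
    (hmeas : ∀ n, MeasurableSet {ω | i ∈ I n ω})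
    (hindep : iIndepSet (fun n => {ω | i ∈ I n ω}) P)
    (N : ℕ) (hN : 1 ≤ N) (π : ℝ) (hπ0 : 0 < π) (hπ1 : π ≤ 1)
    (hπ : ∀ n, ENNReal.ofReal π ≤ P (⋃ j ∈ Finset.Ico n (n + N), {ω | i ∈ I j ω})) :
    limsup
        (fun (n : ℕ) => ∫ ω, ((n : ℝ) - (Nat.findGreatest (fun j => i ∈ I j ω) n : ℝ)) ∂P)
        atTop ≤ (N : ℝ) ^ 2 * (1 + (1 + π) / π ^ 2) ∧
      ∃ M : ℝ, ∀ n : ℕ,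
        ∫ ω, ((n : ℝ) - (Nat.findGreatest (fun j => i ∈ I j ω) n : ℝ)) ∂P ≤ M :=
  stmt5_general P I h0 i hmeas hindep N hN π hπ0 hπ1 hπ
end

section
/- Let $H$ be a separable real Hilbert space, let $I$ be a nonempty finite set, let $(I_n)_{n\in\mathbb{N}}$ be random nonempty subsets of $I$ with $I_0 = I$, and let $i \in I$ be such that the events $([i \in I_n])_{n\in\mathbb{N}}$ are mutually independent and satisfy, for some $N \ge 1$ and $\pi \in (0,1]$, $P\big(\bigcup_{j=n}^{n+N-1}[i \in I_j]\big) \ge \pi$ for all $n$. Set $\vartheta(n) = \max\{j \le n : i \in I_j\}$. Let $(x_n)_{n\in\mathbb{N}}$ be a sequence in $L^2(\Omega,\mathcal{F},P;H)$ with $\sum_{n\in\mathbb{N}} E\|x_{n+1}-x_n\|^2 < +\infty$. Then $E\|x_{\vartheta(n)} - x_n\| \to 0$, i.e., $x_{\vartheta(n)} - x_n \to 0$ in $L^1(\Omega,\mathcal{F},P;H)$. -/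
open MeasureTheory Filter ProbabilityTheory
open scoped Classical
open scoped ENNReal Topology
open Finset

/-!
Telescoping from the last visit `ϑ(n)` of `i` up to `n` gives
`‖x_{ϑ(n)} - x_n‖ ≤ ∑_{j<n} 1[i ∉ I_k for all k ∈ (j, n]] ‖x_{j+1} - x_j‖`, and by
Cauchy–Schwarz the `j`-th term has expectation at most
`√P(no visit in (j, n]) · ‖x_{j+1} - x_j‖_{L²}`. The interval `(j, n]` contains `⌊(n - j)/N⌋`
disjoint blocks of length `N`; by independence each of them is missed with probability at most
`1 - π`, so `E‖x_{ϑ(n)} - x_n‖` is dominated by the convolution `∑_{j<n} c^⌊(n-j)/N⌋ a_j`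
with `c = √(1 - π) < 1` and `a_j = ‖x_{j+1} - x_j‖_{L²} → 0`. A null sequence convolved with a
summable kernel is a null sequence.
-/

theorem summable_pow_div {c : ℝ} (hc0 : 0 ≤ c) (hc1 : c < 1) (N : ℕ) [NeZero N] :
    Summable fun m => c ^ (m / N) := by
  rw [← (Nat.divModEquiv N).symm.summable_iff]
  have hprod : Summable fun p : ℕ × Fin N => c ^ p.1 * (fun _ => (1 : ℝ)) p.2 :=
    (summable_geometric_of_lt_one hc0 hc1).mul_of_nonneg Summable.of_finite
      (fun _ => pow_nonneg hc0 _) (fun _ => zero_le_one)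
  convert hprod using 2 with p
  simp only [Function.comp_apply, Nat.divModEquiv_symm_apply, mul_one]
  rw [Nat.mul_comm, Nat.mul_add_div (NeZero.pos N), Nat.div_eq_of_lt p.2.is_lt, add_zero]

theorem tendsto_sum_range_mul_of_summable_of_tendsto_zero {k a : ℕ → ℝ} (hk : Summable k)
    (ha : Tendsto a atTop (𝓝 0)) :
    Tendsto (fun n => ∑ j ∈ range n, k (n - j) * a j) atTop (𝓝 0) := by
  obtain ⟨C, hC⟩ : ∃ C, ∀ j, ‖a j‖ ≤ C := by
    obtain ⟨C, hC⟩ := ha.norm.bddAbove_range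
    exact ⟨C, fun j => hC ⟨j, rfl⟩⟩
  -- Reversing the order of summation makes the kernel index fixed and lets `n` enter only
  -- through `a`, so that dominated convergence for series applies.
  set f : ℕ → ℕ → ℝ := fun n m => if m < n then k (m + 1) * a (n - 1 - m) else 0
  have hf : ∀ n, ∑ j ∈ range n, k (n - j) * a j = ∑' m, f n m := by
    intro n
    rw [← sum_range_reflect,
      tsum_eq_sum (s := range n) fun m hm => if_neg (by simpa using hm)]
    refine sum_congr rfl fun m hm => ?_
    have hm : m < n := mem_range.1 hm
    simp only [if_pos hm, show n - (n - 1 - m) = m + 1 by omega]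
  have hf_lim : ∀ m, Tendsto (f · m) atTop (𝓝 0) := by
    intro m
    have hshift : Tendsto (fun n => n - 1 - m) atTop atTop := by
      simpa only [Nat.sub_sub] using tendsto_sub_atTop_nat (1 + m)
    have := (ha.comp hshift).const_mul (k (m + 1))
    rw [mul_zero] at this
    refine this.congr' ?_
    filter_upwards [eventually_gt_atTop m] with n hn
    simp [f, hn]
  have hf_le : ∀ n m, ‖f n m‖ ≤ ‖k (m + 1)‖ * C := by
    intro n m
    have hC0 : 0 ≤ C := (norm_nonneg _).trans (hC 0)
    simp only [f]
    split_ifs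
    · rw [norm_mul]; exact mul_le_mul_of_nonneg_left (hC _) (norm_nonneg _)
    · rw [norm_zero]; positivity
  have := tendsto_tsum_of_dominated_convergence
    (((summable_nat_add_iff 1).2 hk).norm.mul_right C) hf_lim (Eventually.of_forall hf_le)
  simpa only [hf, tsum_zero] using this

theorem norm_sub_findGreatest_le {E : Type*} [SeminormedAddCommGroup E] (x : ℕ → E)
    (p : ℕ → Prop) [DecidablePred p] (n : ℕ) :
    ‖x (Nat.findGreatest p n) - x n‖ ≤
      ∑ j ∈ range n, if ∀ k ∈ Ioc j n, ¬p k then ‖x (j + 1) - x j‖ else 0 := by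
  set θ := Nat.findGreatest p n
  calc ‖x θ - x n‖ = dist (x θ) (x n) := (dist_eq_norm _ _).symm
    _ ≤ ∑ j ∈ Ico θ n, dist (x j) (x (j + 1)) :=
      dist_le_Ico_sum_dist x (Nat.findGreatest_le n)
    _ = ∑ j ∈ Ico θ n, if ∀ k ∈ Ioc j n, ¬p k then ‖x (j + 1) - x j‖ else 0 := by
      refine sum_congr rfl fun j hj => ?_
      have hgap : ∀ k ∈ Ioc j n, ¬p k := fun k hk =>
        Nat.findGreatest_is_greatest (by grind) (mem_Ioc.1 hk).2
      rw [if_pos hgap, dist_eq_norm']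
    _ ≤ ∑ j ∈ range n, if ∀ k ∈ Ioc j n, ¬p k then ‖x (j + 1) - x j‖ else 0 :=
      sum_le_sum_of_subset_of_nonneg (fun j hj => mem_range.2 (mem_Ico.1 hj).2)
        fun j _ _ => by positivity

section Measure

variable {Ω : Type*} [MeasurableSpace Ω] {P : Measure Ω}

theorem integral_indicator_le_sqrt_measureReal_mul [IsFiniteMeasure P] {g : Ω → ℝ}
    (hg : MemLp g 2 P) (hg0 : 0 ≤ g) {B : Set Ω} (hB : MeasurableSet B) :
    ∫ ω, B.indicator g ω ∂P ≤ √(P.real B) * √(∫ ω, g ω ^ 2 ∂P) := by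
  have h := integral_mul_le_Lp_mul_Lq_of_nonneg Real.HolderConjugate.two_two
    (ae_of_all P (B.indicator_nonneg fun _ _ => zero_le_one (α := ℝ))) (ae_of_all P hg0)
    (by simpa using (memLp_const (1 : ℝ)).indicator hB) (by simpa using hg)
  have hsq : ∀ ω, B.indicator (fun _ => (1 : ℝ)) ω ^ 2 = B.indicator 1 ω := fun ω => by
    by_cases hω : ω ∈ B <;> simp [hω]
  have hmul : ∀ ω, B.indicator (fun _ => (1 : ℝ)) ω * g ω = B.indicator g ω := fun ω => by
    by_cases hω : ω ∈ B <;> simp [hω]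
  simpa [hsq, hmul, integral_indicator_one hB, Real.sqrt_eq_rpow] using h

namespace ProbabilityTheory

theorem iIndepSet.measure_biInter_compl {ι : Type*} {A : ι → Set Ω} (hA : iIndepSet A P)
    (s : Finset ι) : P (⋂ k ∈ s, (A k)ᶜ) = ∏ k ∈ s, P (A k)ᶜ :=
  ((iIndepSet_iff_iIndep A P).1 hA).meas_biInter fun _ _ =>
    (MeasurableSpace.measurableSet_generateFrom (Set.mem_singleton _)).compl

theorem iIndepSet.measure_biInter_compl_Ico_le_pow {A : ℕ → Set Ω}
    (hA : iIndepSet A P) {N : ℕ} {q : ℝ≥0∞}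
    (hq : ∀ t, P (⋂ k ∈ Ico t (t + N), (A k)ᶜ) ≤ q) (s m : ℕ) :
    P (⋂ k ∈ Ico s (s + m * N), (A k)ᶜ) ≤ q ^ m := by
  induction m with
  | zero => rw [hA.measure_biInter_compl]; simp
  | succ m ih =>
    rw [hA.measure_biInter_compl, add_one_mul, ← add_assoc,
      ← prod_Ico_consecutive _ (Nat.le_add_right s (m * N)) (Nat.le_add_right _ N), pow_succ,
      ← hA.measure_biInter_compl, ← hA.measure_biInter_compl]
    exact mul_le_mul' ih (hq _)

theorem iIndepSet.measure_biInter_compl_Ioc_le_pow_div {A : ℕ → Set Ω}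
    (hA : iIndepSet A P) {N : ℕ} {q : ℝ≥0∞}
    (hq : ∀ t, P (⋂ k ∈ Ico t (t + N), (A k)ᶜ) ≤ q) (j n : ℕ) :
    P (⋂ k ∈ Ioc j n, (A k)ᶜ) ≤ q ^ ((n - j) / N) := by
  have hsub : Ico (j + 1) (j + 1 + (n - j) / N * N) ⊆ Ioc j n := fun k hk => by
    have := Nat.div_mul_le_self (n - j) N
    grind
  exact (measure_mono (Set.biInter_subset_biInter_left hsub)).trans
    (hA.measure_biInter_compl_Ico_le_pow hq _ _)

end ProbabilityTheory

theorem integral_norm_sub_findGreatest_le {E : Type*} [NormedAddCommGroup E]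
    [IsFiniteMeasure P] {A : ℕ → Set Ω} (hA : ∀ n, MeasurableSet (A n)) {x : ℕ → Ω → E}
    (hx : ∀ n, MemLp (x n) 2 P) (n : ℕ) :
    ∫ ω, ‖x (Nat.findGreatest (fun j => ω ∈ A j) n) ω - x n ω‖ ∂P ≤
      ∑ j ∈ range n,
        √(P.real (⋂ k ∈ Ioc j n, (A k)ᶜ)) * √(∫ ω, ‖x (j + 1) ω - x j ω‖ ^ 2 ∂P) := by
  set B : ℕ → Set Ω := fun j => ⋂ k ∈ Ioc j n, (A k)ᶜ
  set Δ : ℕ → Ω → ℝ := fun j ω => ‖x (j + 1) ω - x j ω‖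
  have hΔ : ∀ j, MemLp (Δ j) 2 P := fun j => ((hx (j + 1)).sub (hx j)).norm
  have hB : ∀ j, MeasurableSet (B j) := fun j =>
    .biInter (Set.to_countable _) fun k _ => (hA k).compl
  have hint : ∀ j, Integrable ((B j).indicator (Δ j)) P := fun j =>
    ((hΔ j).integrable one_le_two).indicator (hB j)
  calc ∫ ω, ‖x (Nat.findGreatest (fun j => ω ∈ A j) n) ω - x n ω‖ ∂P
      ≤ ∫ ω, ∑ j ∈ range n, (B j).indicator (Δ j) ω ∂P := by
        refine integral_mono_of_nonneg (ae_of_all _ fun ω => norm_nonneg _)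
          (integrable_finsetSum _ fun j _ => hint j) (ae_of_all _ fun ω => ?_)
        refine (norm_sub_findGreatest_le (x · ω) (fun j => ω ∈ A j) n).trans_eq
          (sum_congr rfl fun j _ => ?_)
        simp [B, Δ, Set.indicator_apply]
    _ = ∑ j ∈ range n, ∫ ω, (B j).indicator (Δ j) ω ∂P :=
        integral_finsetSum _ fun j _ => hint j
    _ ≤ _ := sum_le_sum fun j _ =>
        integral_indicator_le_sqrt_measureReal_mul (hΔ j) (fun ω => norm_nonneg _) (hB j)

end Measure

theorem stmt6_general {Ω ι H : Type*} [MeasurableSpace Ω]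
    [NormedAddCommGroup H]
    (P : Measure Ω) [IsProbabilityMeasure P]
    (I : ℕ → Ω → Set ι)
    (i : ι)
    (hmeas : ∀ n, MeasurableSet {ω | i ∈ I n ω})
    (hindep : iIndepSet (fun n => {ω | i ∈ I n ω}) P)
    (N : ℕ) (hN : 1 ≤ N) (π : ℝ) (hπ0 : 0 < π)
    (hπ : ∀ n, ENNReal.ofReal π ≤ P (⋃ j ∈ Finset.Ico n (n + N), {ω | i ∈ I j ω}))
    (x : ℕ → Ω → H) (hx : ∀ n, MemLp (x n) 2 P)
    (hsum : Summable (fun n => ∫ ω, ‖x (n + 1) ω - x n ω‖ ^ 2 ∂P)) :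
    Tendsto
      (fun n => ∫ ω, ‖x (Nat.findGreatest (fun j => i ∈ I j ω) n) ω - x n ω‖ ∂P)
      atTop (nhds 0) := by
  set A : ℕ → Set Ω := fun n => {ω | i ∈ I n ω}
  set q : ℝ≥0∞ := 1 - ENNReal.ofReal π
  have hq : ∀ t, P (⋂ k ∈ Ico t (t + N), (A k)ᶜ) ≤ q := fun t => by
    have hU : MeasurableSet (⋃ k ∈ Ico t (t + N), A k) :=
      .biUnion (Set.to_countable _) fun k _ => hmeas k
    rw [← Set.compl_iUnion₂, prob_compl_eq_one_sub hU]
    exact tsub_le_tsub_left (hπ t) 1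
  have hq_lt : q.toReal < 1 := ENNReal.toReal_lt_of_lt_ofReal <| by
    simpa using
      ENNReal.sub_lt_self ENNReal.one_ne_top one_ne_zero (ENNReal.ofReal_pos.2 hπ0).ne'
  set c := √q.toReal
  have hc : c < 1 := (Real.sqrt_lt' one_pos).2 (by rwa [one_pow])
  have hgap : ∀ j n, √(P.real (⋂ k ∈ Ioc j n, (A k)ᶜ)) ≤ c ^ ((n - j) / N) := fun j n => by
    rw [Real.sqrt_le_left (by positivity), ← pow_mul, mul_comm, pow_mul,
      Real.sq_sqrt ENNReal.toReal_nonneg, measureReal_def, ← ENNReal.toReal_pow]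
    exact ENNReal.toReal_mono (ENNReal.pow_ne_top (by simp [q]))
      (hindep.measure_biInter_compl_Ioc_le_pow_div hq j n)
  have : NeZero N := ⟨by omega⟩
  refine squeeze_zero (fun n => integral_nonneg fun ω => norm_nonneg _)
    (fun n => (integral_norm_sub_findGreatest_le hmeas hx n).trans
      (sum_le_sum fun j _ => mul_le_mul_of_nonneg_right (hgap j n) (Real.sqrt_nonneg _)))
    (tendsto_sum_range_mul_of_summable_of_tendsto_zero
      (summable_pow_div (by positivity) hc N) ?_)
  simpa using hsum.tendsto_atTop_zero.sqrt

theorem stmt6 {Ω ι H : Type*} [MeasurableSpace Ω] [Fintype ι] [Nonempty ι]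
    [NormedAddCommGroup H] [InnerProductSpace ℝ H] [CompleteSpace H]
    [SecondCountableTopology H]
    (P : Measure Ω) [IsProbabilityMeasure P]
    (I : ℕ → Ω → Set ι)
    (hne : ∀ n ω, (I n ω).Nonempty)
    (h0 : ∀ ω, I 0 ω = Set.univ)
    (i : ι)
    (hmeas : ∀ n, MeasurableSet {ω | i ∈ I n ω})
    (hindep : iIndepSet (fun n => {ω | i ∈ I n ω}) P)
    (N : ℕ) (hN : 1 ≤ N) (π : ℝ) (hπ0 : 0 < π) (hπ1 : π ≤ 1)
    (hπ : ∀ n, ENNReal.ofReal π ≤ P (⋃ j ∈ Finset.Ico n (n + N), {ω | i ∈ I j ω}))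
    (x : ℕ → Ω → H) (hx : ∀ n, MemLp (x n) 2 P)
    (hsum : Summable (fun n => ∫ ω, ‖x (n + 1) ω - x n ω‖ ^ 2 ∂P)) :
    Tendsto
      (fun n => ∫ ω, ‖x (Nat.findGreatest (fun j => i ∈ I j ω) n) ω - x n ω‖ ∂P)
      atTop (nhds 0) :=
  stmt6_general P I i hmeas hindep N hN π hπ0 hπ x hx hsum
end

section
/- Let $H$ be a real Hilbert space, let $W \colon H \to 2^H$ be monotone, let $\alpha > 0$, let $C \colon H \to H$ be $\alpha$-cocoercive, and let $z \in H$ satisfy $0 \in Wz + Cz$. Let $(w, w^*) \in \operatorname{gra} W$, let $q \in H$, and set $t^* = w^* + Cq$. Then $\langle z, t^* \rangle \le \langle w, t^* \rangle + (4\alpha)^{-1}\|w - q\|^2$. -/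
open scoped RealInnerProductSpace

theorem stmt7 {H : Type*} [NormedAddCommGroup H] [InnerProductSpace ℝ H]
    (W : H → Set H)
    (hW : ∀ x x' y y', x' ∈ W x → y' ∈ W y → 0 ≤ ⟪x - y, x' - y'⟫)
    (α : ℝ) (hα : 0 < α) (C : H → H)
    (hC : ∀ x y, α * ‖C x - C y‖ ^ 2 ≤ ⟪x - y, C x - C y⟫)
    (z : H) (hz : -(C z) ∈ W z)
    (w w' q : H) (hw : w' ∈ W w) :
    ⟪z, w' + C q⟫ ≤ ⟪w, w' + C q⟫ + (4 * α)⁻¹ * ‖w - q‖ ^ 2 := by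
  have h1 : 0 ≤ ⟪w - z, w' - -(C z)⟫ := hW w w' z (-(C z)) hw hz
  have h2 : α * ‖C q - C z‖ ^ 2 ≤ ⟪q - z, C q - C z⟫ := hC q z
  have h3 : ⟪q - w, C q - C z⟫ ≤ ‖q - w‖ * ‖C q - C z‖ := real_inner_le_norm _ _
  have hnorm : ‖q - w‖ = ‖w - q‖ := by rw [← norm_neg, neg_sub]
  have key : ⟪z - w, w' + C q⟫ = -⟪w - z, w' - -(C z)⟫ - ⟪q - z, C q - C z⟫ + ⟪q - w, C q - C z⟫ := by
    simp only [inner_sub_left, inner_sub_right, inner_add_right, inner_neg_right]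
    ring
  have hsq : 0 ≤ (2 * α * ‖C q - C z‖ - ‖w - q‖) ^ 2 := sq_nonneg _
  have expand : ⟪z, w' + C q⟫ - ⟪w, w' + C q⟫ = ⟪z - w, w' + C q⟫ := by
    rw [inner_sub_left]
  have h4 : (0:ℝ) < 4 * α := by linarith
  have hinv : (4 * α)⁻¹ * (4 * α) = 1 := inv_mul_cancel₀ (ne_of_gt h4)
  have hfinal : ‖w - q‖ * ‖C q - C z‖ - α * ‖C q - C z‖ ^ 2 ≤ (4 * α)⁻¹ * ‖w - q‖ ^ 2 := by
    rw [← sub_nonneg]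
    have heq : (4 * α)⁻¹ * ‖w - q‖ ^ 2 - (‖w - q‖ * ‖C q - C z‖ - α * ‖C q - C z‖ ^ 2)
        = (4 * α)⁻¹ * (‖w - q‖ - 2 * α * ‖C q - C z‖) ^ 2 := by
      field_simp
      ring
    rw [heq]
    positivity
  have h3' : ⟪q - w, C q - C z⟫ ≤ ‖w - q‖ * ‖C q - C z‖ := by rw [← hnorm]; exact h3
  linarith
end

section
/- Let $H$ be a real Hilbert space, let $W \colon H \to 2^H$ be maximally monotone, let $\alpha > 0$, let $C \colon H \to H$ be $\alpha$-cocoercive, and let $z \in \operatorname{zer}(W+C)$. Let $x, w, q, w^*, e, e^*, f^*, c^* \in H$ be such that $(w + e, w^* + e^*) \in \operatorname{gra} W$ and $c^* + f^* = Cq$, and set $t^* = w^* + c^*$. Then $\langle z, t^* \rangle \le \langle w, t^* \rangle + (4\alpha)^{-1}\|w - q\|^2 + \langle w - z, e^* + f^* \rangle + \langle e, w^* + Cz \rangle + \langle e, e^* \rangle$. -/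
open scoped RealInnerProductSpace

theorem stmt14 {H : Type*} [NormedAddCommGroup H] [InnerProductSpace ℝ H]
    (W : H → Set H)
    (hWmono : ∀ x x' y y', x' ∈ W x → y' ∈ W y → 0 ≤ ⟪x - y, x' - y'⟫)
    (hWmax : ∀ x x', (∀ y y', y' ∈ W y → 0 ≤ ⟪x - y, x' - y'⟫) → x' ∈ W x)
    (α : ℝ) (hα : 0 < α) (C : H → H)
    (hC : ∀ x y, α * ‖C x - C y‖ ^ 2 ≤ ⟪x - y, C x - C y⟫)
    (z : H) (hz : -(C z) ∈ W z)
    (w q w' e e' f' c' : H)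
    (hgra : w' + e' ∈ W (w + e))
    (hcf : c' + f' = C q) :
    ⟪z, w' + c'⟫ ≤ ⟪w, w' + c'⟫ + (4 * α)⁻¹ * ‖w - q‖ ^ 2 +
      ⟪w - z, e' + f'⟫ + ⟪e, w' + C z⟫ + ⟪e, e'⟫ := by
  have hc' : c' = C q - f' := by rw [← hcf]; abel
  subst hc'
  -- monotonicity
  have hm := hWmono (w + e) (w' + e') z (-(C z)) hgra hz
  have hm' : (0:ℝ) ≤ ⟪(w - z) + e, (w' + C z) + e'⟫ := by
    convert hm using 2 <;> abel
  have hm'' : (0:ℝ) ≤ ⟪w - z, w' + C z⟫ + ⟪w - z, e'⟫ + ⟪e, w' + C z⟫ + ⟪e, e'⟫ := by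
    simp only [inner_add_left, inner_add_right] at hm' ⊢
    linarith
  -- cocoercivity
  have hcc := hC q z
  have hcs := real_inner_le_norm (q - w) (C q - C z)
  have hsplit : ⟪z - w, C q - C z⟫ = -⟪q - z, C q - C z⟫ + ⟪q - w, C q - C z⟫ := by
    rw [← inner_neg_left, ← inner_add_left]
    congr 1
    abel
  have hnorm : ‖w - q‖ = ‖q - w‖ := norm_sub_rev w q
  have h2 : ⟪z - w, C q - C z⟫ ≤ (4 * α)⁻¹ * ‖w - q‖ ^ 2 := by
    rw [hsplit, hnorm]
    have key : ‖q - w‖ * ‖C q - C z‖ ≤ (4 * α)⁻¹ * ‖q - w‖ ^ 2 + α * ‖C q - C z‖ ^ 2 := by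
      have hid : (4 * α)⁻¹ * ‖q - w‖ ^ 2 + α * ‖C q - C z‖ ^ 2 - ‖q - w‖ * ‖C q - C z‖
          = (4 * α)⁻¹ * (‖q - w‖ - 2 * α * ‖C q - C z‖) ^ 2 := by
        field_simp
        ring
      nlinarith [mul_nonneg (le_of_lt (by positivity : (0:ℝ) < (4 * α)⁻¹))
        (sq_nonneg (‖q - w‖ - 2 * α * ‖C q - C z‖))]
    nlinarith [norm_nonneg (q - w), norm_nonneg (C q - C z)]
  -- algebraic expansions
  have e1 : ⟪z, w' + (C q - f')⟫ - ⟪w, w' + (C q - f')⟫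
      = -⟪w - z, w' + C z⟫ + ⟪z - w, C q - C z⟫ + ⟪w - z, f'⟫ := by
    simp only [inner_add_right, inner_sub_right, inner_sub_left, inner_add_left]
    ring
  have e2 : ⟪w - z, e' + f'⟫ = ⟪w - z, e'⟫ + ⟪w - z, f'⟫ := inner_add_right _ _ _
  linarith
end

section
/- Let $H$ be a finite-dimensional real Hilbert space, let $W \colon H \to 2^H$ be maximally monotone, let $\alpha > 0$, let $C \colon H \to H$ be $\alpha$-cocoercive, and set $Z = \operatorname{zer}(W + C)$. Let $(x_n)$, $(w_n)$, $(q_n)$, $(w_n^*)$ be sequences of $H$-valued random variables such that almost surely, for every $n$, $(w_n, w_n^*) \in \operatorname{gra} W$, and suppose $x_n - w_n \to 0$, $w_n - q_n \to 0$, and $w_n^* + C q_n \to 0$, all in probability, and that the sequence $(\|x_n\|)_{n\in\mathbb{N}}$ is bounded almost surely. Then almost surely the sequence $(x_n)$ has at least one cluster point in $Z$. -/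
open MeasureTheory Filter
open scoped RealInnerProductSpace

/-!
Convergence in probability of the three error terms, taken jointly, yields one subsequence
along which all of them converge almost surely. Fix a good `ω`: a further subsequence of the
bounded sequence `xₙ(ω)` converges to some `c`, and then `wₙ(ω) → c`, `qₙ(ω) → c` and
`w*ₙ(ω) → -C c` because the cocoercive `C` is Lipschitz. Since the graph of a maximally monotone
operator is sequentially closed, `(c, -C c) ∈ gra W`, i.e. `c ∈ zer (W + C)`.
-/

theorem MeasureTheory.TendstoInMeasure.prodMk {α ι E F : Type*} [MeasurableSpace α]
    {μ : Measure α} {l : Filter ι} [PseudoEMetricSpace E] [PseudoEMetricSpace F]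
    {f : ι → α → E} {g : ι → α → F} {f₀ : α → E} {g₀ : α → F}
    (hf : TendstoInMeasure μ f l f₀) (hg : TendstoInMeasure μ g l g₀) :
    TendstoInMeasure μ (fun i a => (f i a, g i a)) l (fun a => (f₀ a, g₀ a)) := by
  intro ε hε
  have hsum := (hf ε hε).add (hg ε hε)
  rw [add_zero] at hsum
  refine tendsto_of_tendsto_of_tendsto_of_le_of_le tendsto_const_nhds hsum (fun _ => zero_le)
    fun i => (measure_mono fun a ha => ?_).trans (measure_union_le _ _)
  simpa only [Set.mem_ofPred_eq, Set.mem_union, Prod.edist_eq, le_max_iff] using ha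

theorem lipschitzWith_of_cocoercive {H : Type*} [NormedAddCommGroup H] [InnerProductSpace ℝ H]
    {α : ℝ} (hα : 0 < α) {C : H → H} (hC : ∀ x y, α * ‖C x - C y‖ ^ 2 ≤ ⟪x - y, C x - C y⟫) :
    LipschitzWith (Real.toNNReal α⁻¹) C := by
  refine LipschitzWith.of_dist_le' fun x y => ?_
  rw [dist_eq_norm, dist_eq_norm, le_inv_mul_iff₀ hα]
  rcases (norm_nonneg (C x - C y)).eq_or_lt with h | h
  · rw [← h, mul_zero]
    exact norm_nonneg _
  · refine le_of_mul_le_mul_right ?_ h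
    calc α * ‖C x - C y‖ * ‖C x - C y‖ = α * ‖C x - C y‖ ^ 2 := by ring
      _ ≤ ⟪x - y, C x - C y⟫ := hC x y
      _ ≤ ‖x - y‖ * ‖C x - C y‖ := real_inner_le_norm _ _

section MaximalMonotone

variable {H : Type*} [NormedAddCommGroup H] [InnerProductSpace ℝ H] {W : H → Set H}
  (hWmono : ∀ x x' y y', x' ∈ W x → y' ∈ W y → 0 ≤ ⟪x - y, x' - y'⟫)
  (hWmax : ∀ x x', (∀ y y', y' ∈ W y → 0 ≤ ⟪x - y, x' - y'⟫) → x' ∈ W x)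
include hWmono hWmax

theorem mem_of_tendsto_of_maximal_monotone {ι : Type*} {l : Filter ι} [l.NeBot]
    {u v : ι → H} {a b : H} (hmem : ∀ i, v i ∈ W (u i))
    (hu : Tendsto u l (nhds a)) (hv : Tendsto v l (nhds b)) : b ∈ W a :=
  hWmax a b fun y y' hy =>
    ge_of_tendsto ((hu.sub_const y).inner (hv.sub_const y'))
      (Eventually.of_forall fun i => hWmono _ _ _ _ (hmem i) hy)

theorem exists_zero_subseq_limit_of_bounded [ProperSpace H] {C : H → H} (hC : Continuous C)
    {x w q w' : ℕ → H} {M : ℝ} (hgraph : ∀ n, w' n ∈ W (w n))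
    (h1 : Tendsto (fun n => x n - w n) atTop (nhds 0))
    (h2 : Tendsto (fun n => w n - q n) atTop (nhds 0))
    (h3 : Tendsto (fun n => w' n + C (q n)) atTop (nhds 0))
    (hbdd : ∀ n, ‖x n‖ ≤ M) :
    ∃ c : H, -(C c) ∈ W c ∧
      ∃ φ : ℕ → ℕ, StrictMono φ ∧ Tendsto (fun n => x (φ n)) atTop (nhds c) := by
  obtain ⟨c, -, φ, hφ, hx⟩ := tendsto_subseq_of_bounded (Metric.isBounded_closedBall (x := 0))
    fun n => mem_closedBall_zero_iff.2 (hbdd n)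
  refine ⟨c, ?_, φ, hφ, hx⟩
  have hw : Tendsto (fun n => w (φ n)) atTop (nhds c) := by
    simpa using hx.sub (h1.comp hφ.tendsto_atTop)
  have hq : Tendsto (fun n => q (φ n)) atTop (nhds c) := by
    simpa using hw.sub (h2.comp hφ.tendsto_atTop)
  have hw' : Tendsto (fun n => w' (φ n)) atTop (nhds (-(C c))) := by
    simpa using (h3.comp hφ.tendsto_atTop).sub ((hC.tendsto c).comp hq)
  exact mem_of_tendsto_of_maximal_monotone hWmono hWmax (fun n => hgraph (φ n)) hw hw'

end MaximalMonotone

theorem stmt15_general {Ω H : Type*} [MeasurableSpace Ω]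
    [NormedAddCommGroup H] [InnerProductSpace ℝ H] [FiniteDimensional ℝ H]
    (P : Measure Ω)
    (W : H → Set H)
    (hWmono : ∀ x x' y y', x' ∈ W x → y' ∈ W y → 0 ≤ ⟪x - y, x' - y'⟫)
    (hWmax : ∀ x x', (∀ y y', y' ∈ W y → 0 ≤ ⟪x - y, x' - y'⟫) → x' ∈ W x)
    (α : ℝ) (hα : 0 < α) (C : H → H)
    (hC : ∀ x y, α * ‖C x - C y‖ ^ 2 ≤ ⟪x - y, C x - C y⟫)
    (x w q w' : ℕ → Ω → H)
    (hgraph : ∀ᵐ ω ∂P, ∀ n, w' n ω ∈ W (w n ω))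
    (h1 : TendstoInMeasure P (fun n ω => x n ω - w n ω) atTop (0 : Ω → H))
    (h2 : TendstoInMeasure P (fun n ω => w n ω - q n ω) atTop (0 : Ω → H))
    (h3 : TendstoInMeasure P (fun n ω => w' n ω + C (q n ω)) atTop (0 : Ω → H))
    (hbdd : ∀ᵐ ω ∂P, ∃ M : ℝ, ∀ n, ‖x n ω‖ ≤ M) :
    ∀ᵐ ω ∂P, ∃ c : H, -(C c) ∈ W c ∧
      ∃ φ : ℕ → ℕ, StrictMono φ ∧ Tendsto (fun n => x (φ n) ω) atTop (nhds c) := by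
  have hCcont : Continuous C := (lipschitzWith_of_cocoercive hα hC).continuous
  obtain ⟨ψ, hψ, hae⟩ := (h1.prodMk (h2.prodMk h3)).exists_seq_tendsto_ae
  filter_upwards [hgraph, hbdd, hae] with ω hgraphω ⟨M, hM⟩ hlim
  simp only [Pi.zero_apply] at hlim
  obtain ⟨c, hc, φ, hφ, hx⟩ := exists_zero_subseq_limit_of_bounded hWmono hWmax hCcont
    (fun n => hgraphω (ψ n)) hlim.fst_nhds hlim.snd_nhds.fst_nhds hlim.snd_nhds.snd_nhds
    fun n => hM (ψ n)
  exact ⟨c, hc, ψ ∘ φ, hψ.comp hφ, hx⟩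

theorem stmt15 {Ω H : Type*} [MeasurableSpace Ω]
    [NormedAddCommGroup H] [InnerProductSpace ℝ H] [FiniteDimensional ℝ H]
    (P : Measure Ω) [IsProbabilityMeasure P]
    (W : H → Set H)
    (hWmono : ∀ x x' y y', x' ∈ W x → y' ∈ W y → 0 ≤ ⟪x - y, x' - y'⟫)
    (hWmax : ∀ x x', (∀ y y', y' ∈ W y → 0 ≤ ⟪x - y, x' - y'⟫) → x' ∈ W x)
    (α : ℝ) (hα : 0 < α) (C : H → H)
    (hC : ∀ x y, α * ‖C x - C y‖ ^ 2 ≤ ⟪x - y, C x - C y⟫)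
    (x w q w' : ℕ → Ω → H)
    (hgraph : ∀ᵐ ω ∂P, ∀ n, w' n ω ∈ W (w n ω))
    (h1 : TendstoInMeasure P (fun n ω => x n ω - w n ω) atTop (0 : Ω → H))
    (h2 : TendstoInMeasure P (fun n ω => w n ω - q n ω) atTop (0 : Ω → H))
    (h3 : TendstoInMeasure P (fun n ω => w' n ω + C (q n ω)) atTop (0 : Ω → H))
    (hbdd : ∀ᵐ ω ∂P, ∃ M : ℝ, ∀ n, ‖x n ω‖ ≤ M) :
    ∀ᵐ ω ∂P, ∃ c : H, -(C c) ∈ W c ∧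
      ∃ φ : ℕ → ℕ, StrictMono φ ∧ Tendsto (fun n => x (φ n) ω) atTop (nhds c) :=
  stmt15_general P W hWmono hWmax α hα C hC x w q w' hgraph h1 h2 h3 hbdd
end
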